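/- Let H = [[1,0],[0,−1]], E₊ = [[0,1],[0,0]], E₋ = [[0,0],[1,0]] in Matrix (Fin 2) (Fin 2) ℂ. Let Ω ⊆ ℂ be open and connected, let h₊, h₋ : Ω → ℂ be smooth, and let f₊, g₋, g′₊, f′₋ : Ω → ℝ be smooth and everywhere strictly positive. Define A_z := h₊ H + f₊ E₋, A_z̄ := h₋ H + g₋ E₊, A′_z := g′₊ E₊, A′_z̄ := f′₋ E₋, and suppose that for every λ ∈ ℂ with λ ≠ 0 the pencil of connections is flat: ∂_z(A_z̄ + λ⁻¹A′_z̄) − ∂_z̄(A_z + λA′_z) + [A_z + λA′_z, A_z̄ + λ⁻¹A′_z̄] = 0 on Ω. Then: (a) the products g′₊ f₊ and f′₋ g₋ are constant functions on Ω, with constant values c₊ > 0 and c₋ > 0; (b) the function φ := ln(g′₊ f′₋) − ln(g₋ f₊) satisfies the affine Toda (sinh-Gordon type) equation ∂_z∂_z̄ φ = 4(g′₊ f′₋ − g₋ f₊) = 4√(c₊ c₋)(e^{φ/2} − e^{−φ/2}) on Ω. -/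

import Mathlib

open Complex Matrix

noncomputable section

/-- Wirtinger derivative `∂_z` of a ℂ-valued function of one complex variable,
viewed as a function of two real variables:  `∂_z F = ½(∂_x F − i ∂_y F)`. -/
def wdz (f : ℂ → ℂ) (z : ℂ) : ℂ :=
  (1 / 2 : ℂ) * (fderiv ℝ f z 1 - Complex.I * fderiv ℝ f z Complex.I)

/-- Wirtinger derivative `∂_z̄ F = ½(∂_x F + i ∂_y F)`. -/
def wdzbar (f : ℂ → ℂ) (z : ℂ) : ℂ :=
  (1 / 2 : ℂ) * (fderiv ℝ f z 1 + Complex.I * fderiv ℝ f z Complex.I)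

/-- Entrywise Wirtinger derivative `∂_z` for matrix-valued functions. -/
def mdz {n m : Type*} (F : ℂ → Matrix n m ℂ) (z : ℂ) : Matrix n m ℂ :=
  Matrix.of fun i j => wdz (fun w => F w i j) z

/-- Entrywise Wirtinger derivative `∂_z̄` for matrix-valued functions. -/
def mdzbar {n m : Type*} (F : ℂ → Matrix n m ℂ) (z : ℂ) : Matrix n m ℂ :=
  Matrix.of fun i j => wdzbar (fun w => F w i j) z

/-- A matrix-valued function is smooth on a set if each entry is `C^∞`
as a function of the two real variables. -/
def MSmoothOn {n m : Type*} (F : ℂ → Matrix n m ℂ) (Ω : Set ℂ) : Prop :=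
  ∀ i j, ContDiffOn ℝ (⊤ : ℕ∞) (fun z => F z i j) Ω

def matH : Matrix (Fin 2) (Fin 2) ℂ := !![1, 0; 0, -1]
def matEp : Matrix (Fin 2) (Fin 2) ℂ := !![0, 1; 0, 0]
def matEm : Matrix (Fin 2) (Fin 2) ℂ := !![0, 0; 1, 0]

/-! ### Auxiliary Wirtinger calculus lemmas -/

section WirtingerCalc
variable {f g : ℂ → ℂ} {z : ℂ}

lemma wdz_congr (h : f =ᶠ[nhds z] g) : wdz f z = wdz g z := by
  unfold wdz; rw [h.fderiv_eq]

lemma wdz_sub (hf : DifferentiableAt ℝ f z) (hg : DifferentiableAt ℝ g z) :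
    wdz (fun w => f w - g w) z = wdz f z - wdz g z := by
  unfold wdz; rw [fderiv_fun_sub hf hg]; simp; ring

lemma wdzbar_sub (hf : DifferentiableAt ℝ f z) (hg : DifferentiableAt ℝ g z) :
    wdzbar (fun w => f w - g w) z = wdzbar f z - wdzbar g z := by
  unfold wdzbar; rw [fderiv_fun_sub hf hg]; simp; ring

lemma wdz_const_mul (c : ℂ) (hf : DifferentiableAt ℝ f z) :
    wdz (fun w => c * f w) z = c * wdz f z := by
  unfold wdz; rw [fderiv_const_mul hf c]; simp; ring

lemma wdzbar_const_mul (c : ℂ) (hf : DifferentiableAt ℝ f z) :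
    wdzbar (fun w => c * f w) z = c * wdzbar f z := by
  unfold wdzbar; rw [fderiv_const_mul hf c]; simp; ring

lemma wdz_mul (hf : DifferentiableAt ℝ f z) (hg : DifferentiableAt ℝ g z) :
    wdz (fun w => f w * g w) z = wdz f z * g z + f z * wdz g z := by
  unfold wdz; rw [fderiv_fun_mul hf hg]; simp; ring

lemma wdzbar_mul (hf : DifferentiableAt ℝ f z) (hg : DifferentiableAt ℝ g z) :
    wdzbar (fun w => f w * g w) z = wdzbar f z * g z + f z * wdzbar g z := by
  unfold wdzbar; rw [fderiv_fun_mul hf hg]; simp; ring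

lemma differentiableAt_conj_comp (hf : DifferentiableAt ℝ f z) :
    DifferentiableAt ℝ (fun w => (starRingEnd ℂ) (f w)) z :=
  Complex.conjCLE.differentiableAt.comp z hf

lemma fderiv_conj_comp (f : ℂ → ℂ) (z v : ℂ) :
    fderiv ℝ (fun w => (starRingEnd ℂ) (f w)) z v = (starRingEnd ℂ) (fderiv ℝ f z v) := by
  by_cases hf : DifferentiableAt ℝ f z
  · have h := (Complex.conjCLE.toContinuousLinearMap.hasFDerivAt.comp z hf.hasFDerivAt).fderiv
    have h2 : fderiv ℝ (fun w => (starRingEnd ℂ) (f w)) z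
        = (Complex.conjCLE.toContinuousLinearMap).comp (fderiv ℝ f z) := h
    rw [h2]; rfl
  · have h2 : ¬ DifferentiableAt ℝ (fun w => (starRingEnd ℂ) (f w)) z := by
      intro h
      have h3 := Complex.conjCLE.differentiableAt.comp z h
      apply hf
      have he : (⇑Complex.conjCLE ∘ fun w => (starRingEnd ℂ) (f w)) = f := by
        funext w; simp
      rwa [he] at h3
    rw [fderiv_zero_of_not_differentiableAt hf, fderiv_zero_of_not_differentiableAt h2]
    simp

lemma wdzbar_conj (f : ℂ → ℂ) (z : ℂ) :
    wdzbar (fun w => (starRingEnd ℂ) (f w)) z = (starRingEnd ℂ) (wdz f z) := by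
  unfold wdz wdzbar
  rw [fderiv_conj_comp, fderiv_conj_comp]
  simp only [_root_.map_mul, _root_.map_sub, _root_.map_add, _root_.map_div₀, _root_.map_one, _root_.map_ofNat, Complex.conj_I]
  ring

lemma wdz_conj (f : ℂ → ℂ) (z : ℂ) :
    wdz (fun w => (starRingEnd ℂ) (f w)) z = (starRingEnd ℂ) (wdzbar f z) := by
  unfold wdz wdzbar
  rw [fderiv_conj_comp, fderiv_conj_comp]
  simp only [_root_.map_mul, _root_.map_sub, _root_.map_add, _root_.map_div₀, _root_.map_one, _root_.map_ofNat, Complex.conj_I]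
  ring

end WirtingerCalc

section RealStuff
variable {u : ℂ → ℝ} {z : ℂ}

lemma differentiableAt_ofReal_comp (hu : DifferentiableAt ℝ u z) :
    DifferentiableAt ℝ (fun w => ((u w : ℝ) : ℂ)) z :=
  Complex.ofRealCLM.differentiableAt.comp z hu

lemma fderiv_ofReal_comp (u : ℂ → ℝ) (z v : ℂ) :
    fderiv ℝ (fun w => ((u w : ℝ) : ℂ)) z v = ((fderiv ℝ u z v : ℝ) : ℂ) := by
  by_cases hu : DifferentiableAt ℝ u z
  · have h := (Complex.ofRealCLM.hasFDerivAt.comp z hu.hasFDerivAt).fderiv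
    have h2 : fderiv ℝ (fun w => ((u w : ℝ) : ℂ)) z
        = Complex.ofRealCLM.comp (fderiv ℝ u z) := h
    rw [h2]; rfl
  · have h2 : ¬ DifferentiableAt ℝ (fun w => ((u w : ℝ) : ℂ)) z := by
      intro h
      have h3 := Complex.reCLM.differentiableAt.comp z h
      apply hu
      have he : (⇑Complex.reCLM ∘ fun w => ((u w : ℝ) : ℂ)) = u := by
        funext w; simp
      rwa [he] at h3
    rw [fderiv_zero_of_not_differentiableAt hu, fderiv_zero_of_not_differentiableAt h2]
    simp

/-- For real-valued functions, `∂_z` is the conjugate of `∂_z̄`. -/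
lemma wdz_real (u : ℂ → ℝ) (z : ℂ) :
    wdz (fun w => ((u w : ℝ) : ℂ)) z = (starRingEnd ℂ) (wdzbar (fun w => ((u w : ℝ) : ℂ)) z) := by
  unfold wdz wdzbar
  rw [fderiv_ofReal_comp, fderiv_ofReal_comp]
  simp only [_root_.map_mul, _root_.map_add, _root_.map_div₀, _root_.map_one, _root_.map_ofNat, Complex.conj_I, Complex.conj_ofReal]
  ring

lemma hasFDerivAt_log_comp (hu : DifferentiableAt ℝ u z) (h0 : u z ≠ 0) :
    HasFDerivAt (fun w => Real.log (u w)) ((u z)⁻¹ • fderiv ℝ u z) z :=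
  (Real.hasDerivAt_log h0).comp_hasFDerivAt z hu.hasFDerivAt

lemma wdzbar_log (hu : DifferentiableAt ℝ u z) (h0 : u z ≠ 0) :
    wdzbar (fun w => ((Real.log (u w) : ℝ) : ℂ)) z
      = wdzbar (fun w => ((u w : ℝ) : ℂ)) z / (u z : ℂ) := by
  unfold wdzbar
  rw [fderiv_ofReal_comp, fderiv_ofReal_comp, fderiv_ofReal_comp, fderiv_ofReal_comp,
    (hasFDerivAt_log_comp hu h0).fderiv]
  simp only [ContinuousLinearMap.coe_smul', Pi.smul_apply, smul_eq_mul]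
  push_cast
  have : (u z : ℂ) ≠ 0 := by exact_mod_cast h0
  field_simp

lemma differentiableAt_log_ofReal_comp (hu : DifferentiableAt ℝ u z) (h0 : u z ≠ 0) :
    DifferentiableAt ℝ (fun w => ((Real.log (u w) : ℝ) : ℂ)) z :=
  differentiableAt_ofReal_comp (hasFDerivAt_log_comp hu h0).differentiableAt

end RealStuff

/-- Clairaut / symmetry of second derivatives in Wirtinger form. -/
lemma wdz_wdzbar_comm {f : ℂ → ℂ} {z : ℂ} (hf : ContDiffAt ℝ 2 f z) :
    wdz (wdzbar f) z = wdzbar (wdz f) z := by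
  have hev : ∀ᶠ w in nhds z, HasFDerivAt f (fderiv ℝ f w) w := by
    filter_upwards [hf.eventually (by norm_num)] with w hw
    exact (hw.differentiableAt (by norm_num)).hasFDerivAt
  have hf' : DifferentiableAt ℝ (fderiv ℝ f) z :=
    (hf.fderiv_right (by norm_num : (1:WithTop ℕ∞) + 1 ≤ 2)).differentiableAt (by norm_num)
  set f'' := fderiv ℝ (fderiv ℝ f) z with hf''def
  have hsymm := second_derivative_symmetric_of_eventually hev hf'.hasFDerivAt
  have happ : ∀ u : ℂ, HasFDerivAt (fun w => fderiv ℝ f w u)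
      ((f''.flip u)) z := by
    intro u
    have h := hf'.hasFDerivAt.clm_apply (hasFDerivAt_const u z)
    simpa using h
  have hDval : ∀ u v : ℂ, fderiv ℝ (fun w => fderiv ℝ f w u) z v = f'' v u := by
    intro u v
    rw [(happ u).fderiv]; rfl
  have hdiff : ∀ u : ℂ, DifferentiableAt ℝ (fun w => fderiv ℝ f w u) z :=
    fun u => (happ u).differentiableAt
  have e1 : wdzbar f = fun w => (1/2 : ℂ) * (fderiv ℝ f w 1 + I * fderiv ℝ f w I) := rfl
  have e2 : wdz f = fun w => (1/2 : ℂ) * (fderiv ℝ f w 1 - I * fderiv ℝ f w I) := rfl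
  have c1 : ∀ v : ℂ, fderiv ℝ (wdzbar f) z v
      = (1/2 : ℂ) * (f'' v 1 + I * f'' v I) := by
    intro v
    rw [e1]
    rw [fderiv_const_mul (a := fun w => fderiv ℝ f w 1 + I * fderiv ℝ f w I)
      (((hdiff 1).add ((hdiff I).const_mul I))) _]
    rw [fderiv_fun_add (hdiff 1) ((hdiff I).const_mul I)]
    rw [fderiv_const_mul (hdiff I) I]
    simp [hDval]; ring
  have c2 : ∀ v : ℂ, fderiv ℝ (wdz f) z v
      = (1/2 : ℂ) * (f'' v 1 - I * f'' v I) := by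
    intro v
    rw [e2]
    rw [fderiv_const_mul (a := fun w => fderiv ℝ f w 1 - I * fderiv ℝ f w I)
      (((hdiff 1).sub ((hdiff I).const_mul I))) _]
    rw [fderiv_fun_sub (hdiff 1) ((hdiff I).const_mul I)]
    rw [fderiv_const_mul (hdiff I) I]
    simp [hDval]
  show (1/2:ℂ) * (fderiv ℝ (wdzbar f) z 1 - I * fderiv ℝ (wdzbar f) z I)
      = (1/2:ℂ) * (fderiv ℝ (wdz f) z 1 + I * fderiv ℝ (wdz f) z I)
  rw [c1 1, c1 I, c2 1, c2 I, hsymm 1 I]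
  ring

/-- A real function with vanishing derivative on an open preconnected set is constant. -/
lemma const_of_hasFDerivAt_zero {u : ℂ → ℝ} {Ω : Set ℂ} (hΩ : IsOpen Ω)
    (hconn : IsPreconnected Ω) (hu : ∀ z ∈ Ω, HasFDerivAt u (0 : ℂ →L[ℝ] ℝ) z)
    {x y : ℂ} (hx : x ∈ Ω) (hy : y ∈ Ω) : u x = u y := by
  have hloc : ∀ z ∈ Ω, ∃ ε > 0, Metric.ball z ε ⊆ Ω ∧ ∀ w ∈ Metric.ball z ε, u w = u z := by
    intro z hz
    obtain ⟨ε, hε, hball⟩ := Metric.isOpen_iff.mp hΩ z hz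
    refine ⟨ε, hε, hball, fun w hw => ?_⟩
    refine (convex_ball z ε).is_const_of_fderivWithin_eq_zero
      (fun v hv => ((hu v (hball hv)).differentiableAt).differentiableWithinAt)
      (fun v hv => ?_) hw (Metric.mem_ball_self hε)
    rw [fderivWithin_of_isOpen Metric.isOpen_ball hv, (hu v (hball hv)).fderiv]
  by_contra hne
  set U := interior {w | u w = u x} with hU
  set V := interior {w | u w ≠ u x} with hV
  have hcover : Ω ⊆ U ∪ V := by
    intro z hz
    obtain ⟨ε, hε, hball, hc⟩ := hloc z hz
    by_cases h : u z = u x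
    · left
      exact mem_interior.mpr ⟨Metric.ball z ε, fun w hw => by simp [hc w hw, h],
        Metric.isOpen_ball, Metric.mem_ball_self hε⟩
    · right
      exact mem_interior.mpr ⟨Metric.ball z ε, fun w hw => by simp [hc w hw, h],
        Metric.isOpen_ball, Metric.mem_ball_self hε⟩
  have hUx : x ∈ Ω ∩ U := by
    obtain ⟨ε, hε, hball, hc⟩ := hloc x hx
    exact ⟨hx, mem_interior.mpr ⟨Metric.ball x ε, fun w hw => hc w hw,
      Metric.isOpen_ball, Metric.mem_ball_self hε⟩⟩
  have hVy : y ∈ Ω ∩ V := by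
    obtain ⟨ε, hε, hball, hc⟩ := hloc y hy
    refine ⟨hy, mem_interior.mpr ⟨Metric.ball y ε, fun w hw => ?_,
      Metric.isOpen_ball, Metric.mem_ball_self hε⟩⟩
    simp only [Set.mem_setOf_eq, hc w hw]
    exact fun h => hne (h ▸ rfl)
  obtain ⟨w, _, hwU, hwV⟩ := hconn U V isOpen_interior isOpen_interior hcover
    ⟨x, hUx⟩ ⟨y, hVy⟩
  rw [hU] at hwU
  rw [hV] at hwV
  have h1 : w ∈ {w | u w = u x} := interior_subset hwU
  have h2 : w ∈ {w | u w ≠ u x} := interior_subset hwV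
  exact h2 h1

/-- flatness of the pencil `(A_z + λA′_z, A_z̄ + λ⁻¹A′_z̄)` for every
`λ ≠ 0`, with `A_z = h₊H + f₊E₋`, `A_z̄ = h₋H + g₋E₊`, `A′_z = g′₊E₊`, `A′_z̄ = f′₋E₋`,
forces `g′₊f₊ ≡ c₊ > 0` and `f′₋g₋ ≡ c₋ > 0` constant on the connected open set `Ω`,
and `φ := ln(g′₊f′₋) − ln(g₋f₊)` satisfies
`∂_z∂_z̄φ = 4(g′₊f′₋ − g₋f₊) = 4√(c₊c₋)(e^{φ/2} − e^{−φ/2})`. -/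
theorem stmt4 (Ω : Set ℂ) (hΩ : IsOpen Ω) (hconn : IsConnected Ω)
    (hp hm : ℂ → ℂ) (fp gm g'p f'm : ℂ → ℝ)
    (hhp : ContDiffOn ℝ (⊤ : ℕ∞) hp Ω) (hhm : ContDiffOn ℝ (⊤ : ℕ∞) hm Ω)
    (hfp : ContDiffOn ℝ (⊤ : ℕ∞) fp Ω) (hgm : ContDiffOn ℝ (⊤ : ℕ∞) gm Ω)
    (hg'p : ContDiffOn ℝ (⊤ : ℕ∞) g'p Ω) (hf'm : ContDiffOn ℝ (⊤ : ℕ∞) f'm Ω)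
    (hpos : ∀ z ∈ Ω, 0 < fp z ∧ 0 < gm z ∧ 0 < g'p z ∧ 0 < f'm z)
    (Az Azb A'z A'zb : ℂ → Matrix (Fin 2) (Fin 2) ℂ)
    (hAz : ∀ z, Az z = hp z • matH + ((fp z : ℝ) : ℂ) • matEm)
    (hAzb : ∀ z, Azb z = hm z • matH + ((gm z : ℝ) : ℂ) • matEp)
    (hA'z : ∀ z, A'z z = ((g'p z : ℝ) : ℂ) • matEp)
    (hA'zb : ∀ z, A'zb z = ((f'm z : ℝ) : ℂ) • matEm)
    (hflat : ∀ lam : ℂ, lam ≠ 0 → ∀ z ∈ Ω,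
        mdz (fun w => Azb w + lam⁻¹ • A'zb w) z
          - mdzbar (fun w => Az w + lam • A'z w) z
          + ((Az z + lam • A'z z) * (Azb z + lam⁻¹ • A'zb z)
              - (Azb z + lam⁻¹ • A'zb z) * (Az z + lam • A'z z)) = 0) :
    ∃ cp cm : ℝ, 0 < cp ∧ 0 < cm
      ∧ (∀ z ∈ Ω, g'p z * fp z = cp ∧ f'm z * gm z = cm)
      ∧ (∀ z ∈ Ω,
          wdz (fun w => wdzbar (fun v =>
              ((Real.log (g'p v * f'm v) - Real.log (gm v * fp v) : ℝ) : ℂ)) w) z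
            = ((4 * (g'p z * f'm z - gm z * fp z) : ℝ) : ℂ)
          ∧ ((4 * (g'p z * f'm z - gm z * fp z) : ℝ) : ℂ)
            = ((4 * Real.sqrt (cp * cm) *
                (Real.exp ((Real.log (g'p z * f'm z) - Real.log (gm z * fp z)) / 2)
                  - Real.exp (-(Real.log (g'p z * f'm z) - Real.log (gm z * fp z)) / 2))
                : ℝ) : ℂ)) := by
  -- differentiability of the data
  have dhp : ∀ z ∈ Ω, DifferentiableAt ℝ hp z := fun z hz =>
    (hhp.contDiffAt (hΩ.mem_nhds hz)).differentiableAt (by simp)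
  have dhm : ∀ z ∈ Ω, DifferentiableAt ℝ hm z := fun z hz =>
    (hhm.contDiffAt (hΩ.mem_nhds hz)).differentiableAt (by simp)
  have dfp : ∀ z ∈ Ω, DifferentiableAt ℝ fp z := fun z hz =>
    (hfp.contDiffAt (hΩ.mem_nhds hz)).differentiableAt (by simp)
  have dgm : ∀ z ∈ Ω, DifferentiableAt ℝ gm z := fun z hz =>
    (hgm.contDiffAt (hΩ.mem_nhds hz)).differentiableAt (by simp)
  have dg'p : ∀ z ∈ Ω, DifferentiableAt ℝ g'p z := fun z hz =>
    (hg'p.contDiffAt (hΩ.mem_nhds hz)).differentiableAt (by simp)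
  have df'm : ∀ z ∈ Ω, DifferentiableAt ℝ f'm z := fun z hz =>
    (hf'm.contDiffAt (hΩ.mem_nhds hz)).differentiableAt (by simp)
  have dFp : ∀ z ∈ Ω, DifferentiableAt ℝ (fun w => ((fp w : ℝ) : ℂ)) z := fun z hz =>
    differentiableAt_ofReal_comp (dfp z hz)
  have dGm : ∀ z ∈ Ω, DifferentiableAt ℝ (fun w => ((gm w : ℝ) : ℂ)) z := fun z hz =>
    differentiableAt_ofReal_comp (dgm z hz)
  have dG'p : ∀ z ∈ Ω, DifferentiableAt ℝ (fun w => ((g'p w : ℝ) : ℂ)) z := fun z hz =>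
    differentiableAt_ofReal_comp (dg'p z hz)
  have dF'm : ∀ z ∈ Ω, DifferentiableAt ℝ (fun w => ((f'm w : ℝ) : ℂ)) z := fun z hz =>
    differentiableAt_ofReal_comp (df'm z hz)
  -- entry extraction
  have entry : ∀ z ∈ Ω, ∀ (lam : ℂ), lam ≠ 0 → ∀ i j : Fin 2,
      wdz (fun w => (Azb w + lam⁻¹ • A'zb w) i j) z
        - wdzbar (fun w => (Az w + lam • A'z w) i j) z
        + (((Az z + lam • A'z z) * (Azb z + lam⁻¹ • A'zb z)) i j
            - ((Azb z + lam⁻¹ • A'zb z) * (Az z + lam • A'z z)) i j) = 0 := by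
    intro z hz lam hlam i j
    have h := hflat lam hlam z hz
    have h2 : (mdz (fun w => Azb w + lam⁻¹ • A'zb w) z
          - mdzbar (fun w => Az w + lam • A'z w) z
          + ((Az z + lam • A'z z) * (Azb z + lam⁻¹ • A'zb z)
              - (Azb z + lam⁻¹ • A'zb z) * (Az z + lam • A'z z))) i j
        = (0 : Matrix (Fin 2) (Fin 2) ℂ) i j := by rw [h]
    simpa [mdz, mdzbar, Matrix.sub_apply, Matrix.add_apply] using h2
  -- entry functions
  have hfun00 : ∀ lam : ℂ, (fun w => (Azb w + lam⁻¹ • A'zb w) 0 0) = hm := by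
    intro lam; funext w; simp [hAzb, hA'zb, matH, matEp, matEm]
  have hfun00' : ∀ lam : ℂ, (fun w => (Az w + lam • A'z w) 0 0) = hp := by
    intro lam; funext w; simp [hAz, hA'z, matH, matEp, matEm]
  have hfun01 : ∀ lam : ℂ, (fun w => (Azb w + lam⁻¹ • A'zb w) 0 1)
      = (fun w => ((gm w : ℝ) : ℂ)) := by
    intro lam; funext w; simp [hAzb, hA'zb, matH, matEp, matEm]
  have hfun01' : ∀ lam : ℂ, (fun w => (Az w + lam • A'z w) 0 1)
      = (fun w => lam * ((g'p w : ℝ) : ℂ)) := by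
    intro lam; funext w; simp [hAz, hA'z, matH, matEp, matEm]
  have hfun10 : ∀ lam : ℂ, (fun w => (Azb w + lam⁻¹ • A'zb w) 1 0)
      = (fun w => lam⁻¹ * ((f'm w : ℝ) : ℂ)) := by
    intro lam; funext w; simp [hAzb, hA'zb, matH, matEp, matEm]
  have hfun10' : ∀ lam : ℂ, (fun w => (Az w + lam • A'z w) 1 0)
      = (fun w => ((fp w : ℝ) : ℂ)) := by
    intro lam; funext w; simp [hAz, hA'z, matH, matEp, matEm]
  -- commutator entries
  have hc00 : ∀ z : ℂ, ∀ lam : ℂ, lam ≠ 0 →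
      ((Az z + lam • A'z z) * (Azb z + lam⁻¹ • A'zb z)) 0 0
        - ((Azb z + lam⁻¹ • A'zb z) * (Az z + lam • A'z z)) 0 0
      = (g'p z : ℂ) * (f'm z : ℂ) - (gm z : ℂ) * (fp z : ℂ) := by
    intro z lam hlam
    simp [hAz, hAzb, hA'z, hA'zb, matH, matEp, matEm, Matrix.mul_apply, Fin.sum_univ_two]
    field_simp
    ring
  have hc01 : ∀ z : ℂ, ∀ lam : ℂ, lam ≠ 0 →
      ((Az z + lam • A'z z) * (Azb z + lam⁻¹ • A'zb z)) 0 1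
        - ((Azb z + lam⁻¹ • A'zb z) * (Az z + lam • A'z z)) 0 1
      = 2 * hp z * (gm z : ℂ) - 2 * lam * (g'p z : ℂ) * hm z := by
    intro z lam hlam
    simp [hAz, hAzb, hA'z, hA'zb, matH, matEp, matEm, Matrix.mul_apply, Fin.sum_univ_two]
    ring
  have hc10 : ∀ z : ℂ, ∀ lam : ℂ, lam ≠ 0 →
      ((Az z + lam • A'z z) * (Azb z + lam⁻¹ • A'zb z)) 1 0
        - ((Azb z + lam⁻¹ • A'zb z) * (Az z + lam • A'z z)) 1 0
      = 2 * (fp z : ℂ) * hm z - 2 * lam⁻¹ * hp z * (f'm z : ℂ) := by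
    intro z lam hlam
    simp [hAz, hAzb, hA'z, hA'zb, matH, matEp, matEm, Matrix.mul_apply, Fin.sum_univ_two]
    ring
  -- the five scalar equations
  have E1 : ∀ z ∈ Ω, wdzbar (fun w => ((g'p w : ℝ) : ℂ)) z = -2 * (g'p z : ℂ) * hm z := by
    intro z hz
    have h1 := entry z hz 1 one_ne_zero 0 1
    have h2 := entry z hz 2 two_ne_zero 0 1
    rw [hfun01 1, hfun01' 1, hc01 z 1 one_ne_zero,
      wdzbar_const_mul (1 : ℂ) (dG'p z hz)] at h1
    rw [hfun01 2, hfun01' 2, hc01 z 2 two_ne_zero,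
      wdzbar_const_mul (2 : ℂ) (dG'p z hz)] at h2
    linear_combination h1 - h2
  have E3 : ∀ z ∈ Ω, wdz (fun w => ((gm w : ℝ) : ℂ)) z = -2 * hp z * (gm z : ℂ) := by
    intro z hz
    have h1 := entry z hz 1 one_ne_zero 0 1
    have h2 := entry z hz 2 two_ne_zero 0 1
    rw [hfun01 1, hfun01' 1, hc01 z 1 one_ne_zero,
      wdzbar_const_mul (1 : ℂ) (dG'p z hz)] at h1
    rw [hfun01 2, hfun01' 2, hc01 z 2 two_ne_zero,
      wdzbar_const_mul (2 : ℂ) (dG'p z hz)] at h2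
    linear_combination 2 * h1 - h2
  have E2 : ∀ z ∈ Ω, wdz (fun w => ((f'm w : ℝ) : ℂ)) z = 2 * hp z * (f'm z : ℂ) := by
    intro z hz
    have h1 := entry z hz 1 one_ne_zero 1 0
    have h2 := entry z hz 2 two_ne_zero 1 0
    rw [hfun10 1, hfun10' 1, hc10 z 1 one_ne_zero,
      wdz_const_mul ((1 : ℂ)⁻¹) (dF'm z hz)] at h1
    rw [hfun10 2, hfun10' 2, hc10 z 2 two_ne_zero,
      wdz_const_mul ((2 : ℂ)⁻¹) (dF'm z hz)] at h2
    linear_combination 2 * h1 - 2 * h2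
  have E4 : ∀ z ∈ Ω, wdzbar (fun w => ((fp w : ℝ) : ℂ)) z = 2 * (fp z : ℂ) * hm z := by
    intro z hz
    have h1 := entry z hz 1 one_ne_zero 1 0
    have h2 := entry z hz 2 two_ne_zero 1 0
    rw [hfun10 1, hfun10' 1, hc10 z 1 one_ne_zero,
      wdz_const_mul ((1 : ℂ)⁻¹) (dF'm z hz)] at h1
    rw [hfun10 2, hfun10' 2, hc10 z 2 two_ne_zero,
      wdz_const_mul ((2 : ℂ)⁻¹) (dF'm z hz)] at h2
    linear_combination h1 - 2 * h2
  have E5 : ∀ z ∈ Ω, wdz hm z - wdzbar hp z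
      + ((g'p z : ℂ) * (f'm z : ℂ) - (gm z : ℂ) * (fp z : ℂ)) = 0 := by
    intro z hz
    have h0 := entry z hz 1 one_ne_zero 0 0
    rw [hfun00 1, hfun00' 1, hc00 z 1 one_ne_zero] at h0
    linear_combination h0
  -- Part (a): constancy
  have hDzeroU : ∀ z ∈ Ω, HasFDerivAt (fun w => g'p w * fp w) (0 : ℂ →L[ℝ] ℝ) z := by
    intro z hz
    have dU : DifferentiableAt ℝ (fun w => g'p w * fp w) z := (dg'p z hz).mul (dfp z hz)
    have hCU : (fun w => ((g'p w * fp w : ℝ) : ℂ))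
        = fun w => ((g'p w : ℝ) : ℂ) * ((fp w : ℝ) : ℂ) := by
      funext w; push_cast; ring
    have hbar0 : wdzbar (fun w => ((g'p w * fp w : ℝ) : ℂ)) z = 0 := by
      rw [hCU, wdzbar_mul (dG'p z hz) (dFp z hz), E1 z hz, E4 z hz]; ring
    have hz0 : wdz (fun w => ((g'p w * fp w : ℝ) : ℂ)) z = 0 := by
      rw [wdz_real, hbar0, _root_.map_zero]
    have h1 : fderiv ℝ (fun w => ((g'p w * fp w : ℝ) : ℂ)) z 1 = 0 := by
      have heq : fderiv ℝ (fun w => ((g'p w * fp w : ℝ) : ℂ)) z 1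
          = wdz (fun w => ((g'p w * fp w : ℝ) : ℂ)) z
            + wdzbar (fun w => ((g'p w * fp w : ℝ) : ℂ)) z := by
        unfold wdz wdzbar; ring
      rw [heq, hz0, hbar0, add_zero]
    have hI : fderiv ℝ (fun w => ((g'p w * fp w : ℝ) : ℂ)) z Complex.I = 0 := by
      have heq : Complex.I * fderiv ℝ (fun w => ((g'p w * fp w : ℝ) : ℂ)) z Complex.I
          = wdzbar (fun w => ((g'p w * fp w : ℝ) : ℂ)) z
            - wdz (fun w => ((g'p w * fp w : ℝ) : ℂ)) z := by
        unfold wdz wdzbar; ring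
      have h3 : Complex.I * fderiv ℝ (fun w => ((g'p w * fp w : ℝ) : ℂ)) z Complex.I = 0 := by
        rw [heq, hz0, hbar0]; ring
      exact (mul_eq_zero.mp h3).resolve_left Complex.I_ne_zero
    have hr1 : fderiv ℝ (fun w => g'p w * fp w) z 1 = 0 := by
      have h := fderiv_ofReal_comp (fun w => g'p w * fp w) z 1
      rw [h1] at h
      exact_mod_cast h.symm
    have hrI : fderiv ℝ (fun w => g'p w * fp w) z Complex.I = 0 := by
      have h := fderiv_ofReal_comp (fun w => g'p w * fp w) z Complex.I
      rw [hI] at h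
      exact_mod_cast h.symm
    have hfd : fderiv ℝ (fun w => g'p w * fp w) z = 0 := by
      ext v
      have hv : v = v.re • (1 : ℂ) + v.im • Complex.I := by
        apply Complex.ext <;> simp
      calc fderiv ℝ (fun w => g'p w * fp w) z v
          = fderiv ℝ (fun w => g'p w * fp w) z (v.re • (1 : ℂ) + v.im • Complex.I) := by
            rw [← hv]
        _ = v.re • fderiv ℝ (fun w => g'p w * fp w) z 1
              + v.im • fderiv ℝ (fun w => g'p w * fp w) z Complex.I := by
            rw [_root_.map_add, _root_.map_smul, _root_.map_smul]
        _ = 0 := by rw [hr1, hrI]; simp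
    have h := dU.hasFDerivAt
    rwa [hfd] at h
  have hDzeroV : ∀ z ∈ Ω, HasFDerivAt (fun w => f'm w * gm w) (0 : ℂ →L[ℝ] ℝ) z := by
    intro z hz
    have dU : DifferentiableAt ℝ (fun w => f'm w * gm w) z := (df'm z hz).mul (dgm z hz)
    have hCU : (fun w => ((f'm w * gm w : ℝ) : ℂ))
        = fun w => ((f'm w : ℝ) : ℂ) * ((gm w : ℝ) : ℂ) := by
      funext w; push_cast; ring
    have hz0 : wdz (fun w => ((f'm w * gm w : ℝ) : ℂ)) z = 0 := by
      rw [hCU, wdz_mul (dF'm z hz) (dGm z hz), E2 z hz, E3 z hz]; ring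
    have hbar0 : wdzbar (fun w => ((f'm w * gm w : ℝ) : ℂ)) z = 0 := by
      have h := wdz_real (fun w => f'm w * gm w) z
      rw [hz0] at h
      have := congrArg (starRingEnd ℂ) h
      simpa using this.symm
    have h1 : fderiv ℝ (fun w => ((f'm w * gm w : ℝ) : ℂ)) z 1 = 0 := by
      have heq : fderiv ℝ (fun w => ((f'm w * gm w : ℝ) : ℂ)) z 1
          = wdz (fun w => ((f'm w * gm w : ℝ) : ℂ)) z
            + wdzbar (fun w => ((f'm w * gm w : ℝ) : ℂ)) z := by
        unfold wdz wdzbar; ring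
      rw [heq, hz0, hbar0, add_zero]
    have hI : fderiv ℝ (fun w => ((f'm w * gm w : ℝ) : ℂ)) z Complex.I = 0 := by
      have heq : Complex.I * fderiv ℝ (fun w => ((f'm w * gm w : ℝ) : ℂ)) z Complex.I
          = wdzbar (fun w => ((f'm w * gm w : ℝ) : ℂ)) z
            - wdz (fun w => ((f'm w * gm w : ℝ) : ℂ)) z := by
        unfold wdz wdzbar; ring
      have h3 : Complex.I * fderiv ℝ (fun w => ((f'm w * gm w : ℝ) : ℂ)) z Complex.I = 0 := by
        rw [heq, hz0, hbar0]; ring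
      exact (mul_eq_zero.mp h3).resolve_left Complex.I_ne_zero
    have hr1 : fderiv ℝ (fun w => f'm w * gm w) z 1 = 0 := by
      have h := fderiv_ofReal_comp (fun w => f'm w * gm w) z 1
      rw [h1] at h
      exact_mod_cast h.symm
    have hrI : fderiv ℝ (fun w => f'm w * gm w) z Complex.I = 0 := by
      have h := fderiv_ofReal_comp (fun w => f'm w * gm w) z Complex.I
      rw [hI] at h
      exact_mod_cast h.symm
    have hfd : fderiv ℝ (fun w => f'm w * gm w) z = 0 := by
      ext v
      have hv : v = v.re • (1 : ℂ) + v.im • Complex.I := by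
        apply Complex.ext <;> simp
      calc fderiv ℝ (fun w => f'm w * gm w) z v
          = fderiv ℝ (fun w => f'm w * gm w) z (v.re • (1 : ℂ) + v.im • Complex.I) := by
            rw [← hv]
        _ = v.re • fderiv ℝ (fun w => f'm w * gm w) z 1
              + v.im • fderiv ℝ (fun w => f'm w * gm w) z Complex.I := by
            rw [_root_.map_add, _root_.map_smul, _root_.map_smul]
        _ = 0 := by rw [hr1, hrI]; simp
    have h := dU.hasFDerivAt
    rwa [hfd] at h
  obtain ⟨z₀, hz₀⟩ := hconn.nonempty
  have hconstp : ∀ z ∈ Ω, g'p z * fp z = g'p z₀ * fp z₀ := fun z hz =>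
    const_of_hasFDerivAt_zero hΩ hconn.isPreconnected hDzeroU hz hz₀
  have hconstm : ∀ z ∈ Ω, f'm z * gm z = f'm z₀ * gm z₀ := fun z hz =>
    const_of_hasFDerivAt_zero hΩ hconn.isPreconnected hDzeroV hz hz₀
  refine ⟨g'p z₀ * fp z₀, f'm z₀ * gm z₀,
    mul_pos (hpos z₀ hz₀).2.2.1 (hpos z₀ hz₀).1,
    mul_pos (hpos z₀ hz₀).2.2.2 (hpos z₀ hz₀).2.1,
    fun z hz => ⟨hconstp z hz, hconstm z hz⟩, ?_⟩
  intro z hz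
  -- positivity shorthand
  have hPpos : ∀ w ∈ Ω, 0 < g'p w * f'm w := fun w hw =>
    mul_pos (hpos w hw).2.2.1 (hpos w hw).2.2.2
  have hQpos : ∀ w ∈ Ω, 0 < gm w * fp w := fun w hw =>
    mul_pos (hpos w hw).2.1 (hpos w hw).1
  -- Step A: wdzbar of φ on Ω
  have hbarphi : ∀ w ∈ Ω,
      wdzbar (fun v => ((Real.log (g'p v * f'm v) - Real.log (gm v * fp v) : ℝ) : ℂ)) w
        = 4 * (starRingEnd ℂ) (hp w) - 4 * hm w := by
    intro w hw
    have dP : DifferentiableAt ℝ (fun v => g'p v * f'm v) w := (dg'p w hw).mul (df'm w hw)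
    have dQ : DifferentiableAt ℝ (fun v => gm v * fp v) w := (dgm w hw).mul (dfp w hw)
    have hP0 : g'p w * f'm w ≠ 0 := ne_of_gt (hPpos w hw)
    have hQ0 : gm w * fp w ≠ 0 := ne_of_gt (hQpos w hw)
    have hsplit : (fun v => ((Real.log (g'p v * f'm v) - Real.log (gm v * fp v) : ℝ) : ℂ))
        = fun v => ((Real.log (g'p v * f'm v) : ℝ) : ℂ) - ((Real.log (gm v * fp v) : ℝ) : ℂ) := by
      funext v; push_cast; ring
    rw [hsplit,
      wdzbar_sub (differentiableAt_log_ofReal_comp dP hP0)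
        (differentiableAt_log_ofReal_comp dQ hQ0),
      wdzbar_log dP hP0, wdzbar_log dQ hQ0]
    have hCP : (fun v => ((g'p v * f'm v : ℝ) : ℂ))
        = fun v => ((g'p v : ℝ) : ℂ) * ((f'm v : ℝ) : ℂ) := by funext v; push_cast; ring
    have hCQ : (fun v => ((gm v * fp v : ℝ) : ℂ))
        = fun v => ((gm v : ℝ) : ℂ) * ((fp v : ℝ) : ℂ) := by funext v; push_cast; ring
    rw [hCP, hCQ, wdzbar_mul (dG'p w hw) (dF'm w hw), wdzbar_mul (dGm w hw) (dFp w hw)]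
    have hFm : wdzbar (fun v => ((f'm v : ℝ) : ℂ)) w
        = (starRingEnd ℂ) (2 * hp w * ((f'm w : ℝ) : ℂ)) := by
      have h := wdz_real f'm w
      have h2 := congrArg (starRingEnd ℂ) h
      simp only [Complex.conj_conj] at h2
      rw [← h2, E2 w hw]
    have hGm : wdzbar (fun v => ((gm v : ℝ) : ℂ)) w
        = (starRingEnd ℂ) (-2 * hp w * ((gm w : ℝ) : ℂ)) := by
      have h := wdz_real gm w
      have h2 := congrArg (starRingEnd ℂ) h
      simp only [Complex.conj_conj] at h2
      rw [← h2, E3 w hw]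
    rw [hFm, hGm, E1 w hw, E4 w hw]
    have hg'pc : ((g'p w : ℝ) : ℂ) ≠ 0 := by
      exact_mod_cast ne_of_gt (hpos w hw).2.2.1
    have hf'mc : ((f'm w : ℝ) : ℂ) ≠ 0 := by
      exact_mod_cast ne_of_gt (hpos w hw).2.2.2
    have hgmc : ((gm w : ℝ) : ℂ) ≠ 0 := by
      exact_mod_cast ne_of_gt (hpos w hw).2.1
    have hfpc : ((fp w : ℝ) : ℂ) ≠ 0 := by
      exact_mod_cast ne_of_gt (hpos w hw).1
    simp only [_root_.map_mul, _root_.map_neg, _root_.map_ofNat, Complex.conj_ofReal]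
    push_cast
    field_simp
    ring
  -- Step B: representation of the mixed derivative
  have hXrepr : wdz (wdzbar (fun v =>
        ((Real.log (g'p v * f'm v) - Real.log (gm v * fp v) : ℝ) : ℂ))) z
      = 4 * (starRingEnd ℂ) (wdzbar hp z) - 4 * wdz hm z := by
    have hev : wdzbar (fun v =>
          ((Real.log (g'p v * f'm v) - Real.log (gm v * fp v) : ℝ) : ℂ))
        =ᶠ[nhds z] (fun w => 4 * (starRingEnd ℂ) (hp w) - 4 * hm w) :=
      Filter.eventuallyEq_of_mem (hΩ.mem_nhds hz) hbarphi
    rw [wdz_congr hev,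
      wdz_sub ((differentiableAt_conj_comp (dhp z hz)).const_mul 4) ((dhm z hz).const_mul 4),
      wdz_const_mul 4 (differentiableAt_conj_comp (dhp z hz)),
      wdz_const_mul 4 (dhm z hz), wdz_conj]
  -- Step C: reality via Clairaut
  have hXconj : wdz (wdzbar (fun v =>
        ((Real.log (g'p v * f'm v) - Real.log (gm v * fp v) : ℝ) : ℂ))) z
      = (starRingEnd ℂ) (wdz (wdzbar (fun v =>
        ((Real.log (g'p v * f'm v) - Real.log (gm v * fp v) : ℝ) : ℂ))) z) := by
    have hsm : ContDiffAt ℝ 2 (fun v =>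
        ((Real.log (g'p v * f'm v) - Real.log (gm v * fp v) : ℝ) : ℂ)) z := by
      have c1 : ContDiffAt ℝ 2
          (fun v => Real.log (g'p v * f'm v) - Real.log (gm v * fp v)) z := by
        have hg2 : ContDiffAt ℝ 2 g'p z := (hg'p.contDiffAt (hΩ.mem_nhds hz)).of_le (WithTop.coe_le_coe.mpr le_top)
        have hf2 : ContDiffAt ℝ 2 f'm z := (hf'm.contDiffAt (hΩ.mem_nhds hz)).of_le (WithTop.coe_le_coe.mpr le_top)
        have hgm2 : ContDiffAt ℝ 2 gm z := (hgm.contDiffAt (hΩ.mem_nhds hz)).of_le (WithTop.coe_le_coe.mpr le_top)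
        have hfp2 : ContDiffAt ℝ 2 fp z := (hfp.contDiffAt (hΩ.mem_nhds hz)).of_le (WithTop.coe_le_coe.mpr le_top)
        have h1 := hg2.mul hf2
        have h2 := hgm2.mul hfp2
        exact (h1.log (ne_of_gt (hPpos z hz))).sub (h2.log (ne_of_gt (hQpos z hz)))
      exact (Complex.ofRealCLM.contDiff.contDiffAt).comp z c1
    have hcomm := wdz_wdzbar_comm hsm
    have hreal : wdz (fun v =>
          ((Real.log (g'p v * f'm v) - Real.log (gm v * fp v) : ℝ) : ℂ))
        = fun w => (starRingEnd ℂ) (wdzbar (fun v =>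
          ((Real.log (g'p v * f'm v) - Real.log (gm v * fp v) : ℝ) : ℂ)) w) :=
      funext fun w => wdz_real _ w
    have hstep : wdzbar (wdz (fun v =>
        ((Real.log (g'p v * f'm v) - Real.log (gm v * fp v) : ℝ) : ℂ))) z
        = (starRingEnd ℂ) (wdz (wdzbar (fun v =>
        ((Real.log (g'p v * f'm v) - Real.log (gm v * fp v) : ℝ) : ℂ))) z) := by
      rw [hreal, wdzbar_conj]
    exact hcomm.trans hstep
  constructor
  · -- first identity of (b)
    have hE5 := E5 z hz
    have hrepr2 : wdz (wdzbar (fun v =>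
          ((Real.log (g'p v * f'm v) - Real.log (gm v * fp v) : ℝ) : ℂ))) z
        = 4 * (starRingEnd ℂ) (wdzbar hp z) - 4 * wdzbar hp z
          + ((4 * (g'p z * f'm z - gm z * fp z) : ℝ) : ℂ) := by
      rw [hXrepr]
      push_cast
      linear_combination (-4 : ℂ) * hE5
    have h2X : wdz (wdzbar (fun v =>
          ((Real.log (g'p v * f'm v) - Real.log (gm v * fp v) : ℝ) : ℂ))) z
        + wdz (wdzbar (fun v =>
          ((Real.log (g'p v * f'm v) - Real.log (gm v * fp v) : ℝ) : ℂ))) z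
        = ((4 * (g'p z * f'm z - gm z * fp z) : ℝ) : ℂ)
          + ((4 * (g'p z * f'm z - gm z * fp z) : ℝ) : ℂ) := by
      nth_rewrite 2 [hXconj]
      rw [hrepr2]
      simp only [_root_.map_add, _root_.map_sub, _root_.map_mul, _root_.map_ofNat,
        Complex.conj_conj, Complex.conj_ofReal]
      ring
    show wdz (wdzbar (fun v =>
        ((Real.log (g'p v * f'm v) - Real.log (gm v * fp v) : ℝ) : ℂ))) z
      = ((4 * (g'p z * f'm z - gm z * fp z) : ℝ) : ℂ)
    linear_combination h2X / 2
  · -- second identity of (b): purely real computation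
    have hP : 0 < g'p z * f'm z := hPpos z hz
    have hQ : 0 < gm z * fp z := hQpos z hz
    have hcpcm : (g'p z₀ * fp z₀) * (f'm z₀ * gm z₀) = (g'p z * f'm z) * (gm z * fp z) := by
      rw [← hconstp z hz, ← hconstm z hz]; ring
    have hsP : 0 < Real.sqrt (g'p z * f'm z) := Real.sqrt_pos.mpr hP
    have hsQ : 0 < Real.sqrt (gm z * fp z) := Real.sqrt_pos.mpr hQ
    have e1 : Real.exp ((Real.log (g'p z * f'm z) - Real.log (gm z * fp z)) / 2)
        = Real.sqrt (g'p z * f'm z) / Real.sqrt (gm z * fp z) := by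
      rw [show (Real.log (g'p z * f'm z) - Real.log (gm z * fp z)) / 2
          = Real.log (Real.sqrt (g'p z * f'm z)) - Real.log (Real.sqrt (gm z * fp z)) by
        rw [Real.log_sqrt hP.le, Real.log_sqrt hQ.le]; ring]
      rw [Real.exp_sub, Real.exp_log hsP, Real.exp_log hsQ]
    have e2 : Real.exp (-(Real.log (g'p z * f'm z) - Real.log (gm z * fp z)) / 2)
        = Real.sqrt (gm z * fp z) / Real.sqrt (g'p z * f'm z) := by
      rw [show (-(Real.log (g'p z * f'm z) - Real.log (gm z * fp z))) / 2
          = Real.log (Real.sqrt (gm z * fp z)) - Real.log (Real.sqrt (g'p z * f'm z)) by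
        rw [Real.log_sqrt hP.le, Real.log_sqrt hQ.le]; ring]
      rw [Real.exp_sub, Real.exp_log hsQ, Real.exp_log hsP]
    have hsqrt : Real.sqrt ((g'p z₀ * fp z₀) * (f'm z₀ * gm z₀))
        = Real.sqrt (g'p z * f'm z) * Real.sqrt (gm z * fp z) := by
      rw [hcpcm, Real.sqrt_mul hP.le]
    have hreal : 4 * (g'p z * f'm z - gm z * fp z)
        = 4 * Real.sqrt ((g'p z₀ * fp z₀) * (f'm z₀ * gm z₀)) *
            (Real.exp ((Real.log (g'p z * f'm z) - Real.log (gm z * fp z)) / 2)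
              - Real.exp (-(Real.log (g'p z * f'm z) - Real.log (gm z * fp z)) / 2)) := by
      rw [hsqrt, e1, e2]
      have hP' : Real.sqrt (g'p z * f'm z) * Real.sqrt (g'p z * f'm z) = g'p z * f'm z :=
        Real.mul_self_sqrt hP.le
      have hQ' : Real.sqrt (gm z * fp z) * Real.sqrt (gm z * fp z) = gm z * fp z :=
        Real.mul_self_sqrt hQ.le
      field_simp
      linear_combination -hP' + hQ'
    exact_mod_cast congrArg (fun r : ℝ => (r : ℂ)) hreal
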